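/- Let 𝒢=(V,E) be a temporal graph, s,z∈V, and x,δ∈ℕ. If there is an x-traversal-delay-robust (s,z)-route in 𝒢, then there is an x-traversal-delay-robust (s,z)-route in which no vertex appears twice. -/

import Mathlib

/-- A time arc of a temporal graph: start vertex, end vertex, time label, traversal time. -/
structure TimeArc (V : Type) where
  src : V
  dst : V
  time : ℕ
  trav : ℕ
deriving DecidableEq

variable {V : Type}

/-- `P` is a `D`-traversal-delayed temporal walk in the temporal graph with time-arc set `E`
(with delay time `δ`). -/
def IsTDWalk [DecidableEq V] (E D : Finset (TimeArc V)) (δ : ℕ)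
    (P : List (TimeArc V)) : Prop :=
  (∀ e ∈ P, e ∈ E) ∧
  P.Chain' (fun e f => f.src = e.dst ∧
    e.time + e.trav + (if e ∈ D then δ else 0) ≤ f.time)

/-- `P` is a `D`-starting-delayed temporal walk in the temporal graph with time-arc set `E`
(with delay time `δ`). -/
def IsSDWalk [DecidableEq V] (E D : Finset (TimeArc V)) (δ : ℕ)
    (P : List (TimeArc V)) : Prop :=
  (∀ e ∈ P, e ∈ E) ∧
  P.Chain' (fun e f => f.src = e.dst ∧
    e.time + e.trav + (if e ∈ D then δ else 0) ≤ f.time + (if f ∈ D then δ else 0))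

/-- The sequence of vertices visited by a walk: the start vertex of its first arc followed by
the end vertices of all its arcs. -/
def visits : List (TimeArc V) → List V
  | [] => []
  | e :: es => e.src :: (e :: es).map TimeArc.dst

/-- The walk `P` follows the route `R`: the visited vertex sequence of `P` equals `R`
(the empty walk follows every single-vertex route). -/
def Follows (P : List (TimeArc V)) (R : List V) : Prop :=
  match P with
  | [] => ∃ v, R = [v]
  | e :: es => visits (e :: es) = R

/-- `R` is a `D`-traversal-delayed route: some `D`-traversal-delayed temporal walk follows `R`. -/
def IsTDRoute [DecidableEq V] (E D : Finset (TimeArc V)) (δ : ℕ) (R : List V) : Prop :=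
  ∃ P : List (TimeArc V), IsTDWalk E D δ P ∧ Follows P R

/-- `R` is a `D`-starting-delayed route: some `D`-starting-delayed temporal walk follows `R`. -/
def IsSDRoute [DecidableEq V] (E D : Finset (TimeArc V)) (δ : ℕ) (R : List V) : Prop :=
  ∃ P : List (TimeArc V), IsSDWalk E D δ P ∧ Follows P R

/-- `R` is `x`-traversal-delay-robust: it is a `D`-traversal-delayed route for every
`D ⊆ E` with `|D| ≤ x`. -/
def TDRobust [DecidableEq V] (E : Finset (TimeArc V)) (δ x : ℕ) (R : List V) : Prop :=
  ∀ D : Finset (TimeArc V), D ⊆ E → D.card ≤ x → IsTDRoute E D δ R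

/-- `R` is `x`-starting-delay-robust: it is a `D`-starting-delayed route for every
`D ⊆ E` with `|D| ≤ x`. -/
def SDRobust [DecidableEq V] (E : Finset (TimeArc V)) (δ x : ℕ) (R : List V) : Prop :=
  ∀ D : Finset (TimeArc V), D ⊆ E → D.card ≤ x → IsSDRoute E D δ R


namespace RobustAux

variable {V : Type} [DecidableEq V]

/-- Time-monotonicity relation between arcs. -/
abbrev mono (D : Finset (TimeArc V)) (δ : ℕ) (e f : TimeArc V) : Prop :=
  e.time + e.trav + (if e ∈ D then δ else 0) ≤ f.time

/-- The chain relation of `D`-traversal-delayed walks. -/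
abbrev rel (D : Finset (TimeArc V)) (δ : ℕ) (e f : TimeArc V) : Prop :=
  f.src = e.dst ∧ mono D δ e f

lemma pairwise_mono {D : Finset (TimeArc V)} {δ : ℕ} {P : List (TimeArc V)}
    (h : P.Chain' (rel D δ)) : P.Pairwise (mono D δ) := by
  haveI : IsTrans (TimeArc V) (mono D δ) :=
    ⟨fun a b c hab hbc =>
      hab.trans (((Nat.le_add_right _ _).trans (Nat.le_add_right _ _)).trans hbc)⟩
  exact List.isChain_iff_pairwise.mp (h.imp fun _ _ hab => hab.2)

/-- Dropping a prefix of a walk up to the second occurrence vertex. -/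
lemma drop_prefix {D : Finset (TimeArc V)} {δ : ℕ} :
    ∀ (L : List V) (P : List (TimeArc V)) (u v : V) (C : List V),
    P.Chain' (rel D δ) → visits P = u :: (L ++ v :: C) →
    ∃ P', List.Sublist P' P ∧ P'.Chain' (rel D δ) ∧ Follows P' (v :: C) := by
  intro L
  induction L with
  | nil =>
    intro P u v C hc hv
    cases P with
    | nil => simp [visits] at hv
    | cons e es =>
      simp only [visits, List.map_cons, List.nil_append, List.cons.injEq] at hv
      obtain ⟨rfl, rfl, hmap⟩ := hv
      cases es with
      | nil =>
        simp only [List.map_nil] at hmap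
        exact ⟨[], List.nil_sublist _, List.isChain_nil, e.dst, by rw [← hmap]⟩
      | cons f es' =>
        refine ⟨f :: es', (List.sublist_cons_self e _), hc.tail, ?_⟩
        have hsrc : f.src = e.dst := (List.isChain_cons_cons.mp hc).1.1
        show visits (f :: es') = e.dst :: C
        simp only [visits, hsrc, hmap]
  | cons b L' ih =>
    intro P u v C hc hv
    cases P with
    | nil => simp [visits] at hv
    | cons e es =>
      simp only [visits, List.map_cons, List.cons_append, List.cons.injEq] at hv
      obtain ⟨rfl, rfl, hmap⟩ := hv
      cases es with
      | nil => simp at hmap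
      | cons f es' =>
        have hsrc : f.src = e.dst := (List.isChain_cons_cons.mp hc).1.1
        have hv' : visits (f :: es') = e.dst :: (L' ++ v :: C) := by
          simp only [visits, hsrc, hmap]
        obtain ⟨P', hsub, hch, hf⟩ := ih (f :: es') e.dst v C hc.tail hv'
        exact ⟨P', hsub.trans (List.sublist_cons_self e _), hch, hf⟩

/-- Shortcutting a walk that visits a vertex twice. -/
lemma shortcut_walk {D : Finset (TimeArc V)} {δ : ℕ} :
    ∀ (A : List V) (P : List (TimeArc V)) (v : V) (B C : List V),
    P.Chain' (rel D δ) → P.Pairwise (mono D δ) →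
    visits P = A ++ v :: B ++ v :: C →
    ∃ P', List.Sublist P' P ∧ P'.Chain' (rel D δ) ∧ Follows P' (A ++ v :: C) := by
  intro A
  induction A with
  | nil =>
    intro P v B C hc _ hv
    simpa using drop_prefix B P v v C hc (by simpa using hv)
  | cons a A' ih =>
    intro P v B C hc hpw hv
    cases P with
    | nil => simp [visits] at hv
    | cons e es =>
      simp only [visits, List.map_cons, List.cons_append, List.cons.injEq] at hv
      obtain ⟨rfl, hdst⟩ := hv
      cases es with
      | nil =>
        exfalso
        have hlen := congrArg List.length hdst
        simp at hlen
        omega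
      | cons f es' =>
        have hsrc : f.src = e.dst := (List.isChain_cons_cons.mp hc).1.1
        have hv' : visits (f :: es') = A' ++ v :: B ++ v :: C := by
          simp only [visits, hsrc]
          exact hdst
        obtain ⟨P', hsub, hch, hf⟩ := ih (f :: es') v B C hc.tail hpw.tail hv'
        have hq : (A' ++ v :: B ++ v :: C).head? = some e.dst := by
          rw [← hdst]; rfl
        have hhead : (A' ++ v :: C).head? = some e.dst := by
          cases A' with
          | nil => simpa using hq
          | cons a'' A'' => simpa using hq
        refine ⟨e :: P', hsub.cons₂ e, ?_, ?_⟩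
        · -- chain
          cases P' with
          | nil => exact List.isChain_singleton _
          | cons g P'' =>
            have hgv : visits (g :: P'') = A' ++ v :: C := hf
            have hgsrc : g.src = e.dst := by
              have h1 : (A' ++ v :: C).head? = some g.src := by
                rw [← hgv]; rfl
              rw [h1] at hhead
              exact Option.some.inj hhead
            refine List.isChain_cons_cons.mpr ⟨⟨hgsrc, ?_⟩, hch⟩
            exact (List.pairwise_cons.mp hpw).1 g
              (hsub.subset (List.mem_cons_self (a := g) (l := P'')))
        · -- Follows
          cases P' with
          | nil =>
            obtain ⟨w, hw⟩ := hf
            cases A' with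
            | cons a'' A'' =>
              exfalso
              have := congrArg List.length hw
              simp at this
            | nil =>
              cases C with
              | cons c C' =>
                exfalso
                have := congrArg List.length hw
                simp at this
              | nil =>
                have hev : v = e.dst := by simpa using hhead
                show visits [e] = [e.src, v]
                simp [visits, hev]
          | cons g P'' =>
            have hgv : visits (g :: P'') = A' ++ v :: C := hf
            have hgsrc : g.src = e.dst := by
              have h1 : (A' ++ v :: C).head? = some g.src := by
                rw [← hgv]; rfl
              rw [h1] at hhead
              exact Option.some.inj hhead
            have h2 : e.dst :: List.map TimeArc.dst (g :: P'') = A' ++ v :: C := by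
              rw [← hgsrc]; exact hgv
            show e.src :: e.dst :: List.map TimeArc.dst (g :: P'')
                = e.src :: (A' ++ v :: C)
            rw [h2]

lemma shortcut_route {E D : Finset (TimeArc V)} {δ : ℕ} {A : List V} {v : V} {B C : List V}
    (h : IsTDRoute E D δ (A ++ v :: B ++ v :: C)) : IsTDRoute E D δ (A ++ v :: C) := by
  obtain ⟨P, ⟨hE, hc⟩, hf⟩ := h
  have hc' : P.Chain' (rel D δ) := hc
  cases P with
  | nil =>
    obtain ⟨w, hw⟩ := hf
    exfalso
    have := congrArg List.length hw
    simp at this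
    omega
  | cons e es =>
    have hv : visits (e :: es) = A ++ v :: B ++ v :: C := hf
    obtain ⟨P', hsub, hch, hf'⟩ :=
      shortcut_walk A (e :: es) v B C hc' (pairwise_mono hc') hv
    exact ⟨P', ⟨fun a ha => hE a (hsub.subset ha), hch⟩, hf'⟩

lemma dup_split {v : V} : ∀ {R : List V}, List.Sublist [v, v] R →
    ∃ A B C, R = A ++ v :: B ++ v :: C := by
  intro R h
  induction R with
  | nil => simp at h
  | cons r R' ih =>
    cases h with
    | cons _ h' =>
      obtain ⟨A, B, C, rfl⟩ := ih h'
      exact ⟨r :: A, B, C, rfl⟩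
    | cons_cons _ h' =>
      obtain ⟨B, C, rfl⟩ := List.append_of_mem (List.singleton_sublist.mp h')
      exact ⟨[], B, C, rfl⟩

end RobustAux

theorem statement2 {V : Type} [DecidableEq V] (E : Finset (TimeArc V))
    (s z : V) (x δ : ℕ)
    (h : ∃ R : List V, R.head? = some s ∧ R.getLast? = some z ∧ TDRobust E δ x R) :
    ∃ R : List V, R.head? = some s ∧ R.getLast? = some z ∧ R.Nodup ∧ TDRobust E δ x R := by
  obtain ⟨R, h1, h2, h3⟩ := h
  suffices H : ∀ n (R : List V), R.length ≤ n → R.head? = some s → R.getLast? = some z →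
      TDRobust E δ x R →
      ∃ R', R'.head? = some s ∧ R'.getLast? = some z ∧ R'.Nodup ∧ TDRobust E δ x R' by
    exact H R.length R le_rfl h1 h2 h3
  intro n
  induction n with
  | zero =>
    intro R hl h1 h2 h3
    cases R with
    | nil => simp at h1
    | cons r R' => simp at hl
  | succ n ih =>
    intro R hl h1 h2 h3
    by_cases hnd : R.Nodup
    · exact ⟨R, h1, h2, hnd, h3⟩
    · obtain ⟨v, hdup⟩ := List.exists_duplicate_iff_not_nodup.mpr hnd
      obtain ⟨A, B, C, rfl⟩ := RobustAux.dup_split (List.duplicate_iff_sublist.mp hdup)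
      apply ih (A ++ v :: C)
      · have := hl
        simp [List.length_append] at this ⊢
        omega
      · cases A with
        | nil => simpa using h1
        | cons a A' => simpa using h1
      · have e1 : (A ++ v :: B ++ v :: C) = (A ++ v :: B) ++ v :: C := by simp
        have e2 : (A ++ v :: C).getLast? = (v :: C).getLast? :=
          List.getLast?_append_cons A v C
        rw [e1, List.getLast?_append_cons] at h2
        rw [e2]
        exact h2
      · intro D hD hcard
        exact RobustAux.shortcut_route (h3 D hD hcard)
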